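/- arXiv:2506.18144 — 2 statements merged into one kernel-verified Lean document; each statement's English description precedes it below -/
import Mathlib

section
/- For the system f1 = x1 - 2^h, f2 = x2 - x1^d, f3 = x2^d in two variables, there is an explicit Bézout identity 2^{d^2 h} = g1*f1 + g2*f2 + f3 with g1, g2 in Z[x1,x2], deg(g1) <= 2(d-1) and deg(g2) = d-1; concretely, x2^d - 2^{d^2 h} = q(x2)*(x2 - x1^d) + q(x2)*(x1^d - 2^{dh}) where q(x2) = (x2^d - 2^{d^2 h})/(x2 - 2^{dh}). -/
open MvPolynomial Finset

/-- For f₁ = x₁ - 2ʰ, f₂ = x₂ - x₁ᵈ, f₃ = x₂ᵈ in ℤ[x₁,x₂], there is a Bézout identity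
2^{d²h} = g₁·f₁ + g₂·f₂ + f₃ with deg g₁ ≤ 2(d-1) and deg g₂ = d-1. -/
theorem stmt11 (d h : ℕ) (hd : 1 ≤ d) (hh : 1 ≤ h) :
    ∃ g₁ g₂ : MvPolynomial (Fin 2) ℤ,
      (C (2 ^ (d ^ 2 * h)) : MvPolynomial (Fin 2) ℤ) =
          g₁ * (X 0 - C (2 ^ h)) + g₂ * (X 1 - X 0 ^ d) + X 1 ^ d ∧
      g₁.totalDegree ≤ 2 * (d - 1) ∧
      g₂.totalDegree = d - 1 := by
  set a : ℤ := 2 ^ (d * h) with ha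
  set q : MvPolynomial (Fin 2) ℤ := ∑ i ∈ range d, X 1 ^ i * C a ^ (d - 1 - i) with hq
  set p : MvPolynomial (Fin 2) ℤ := ∑ i ∈ range d, X 0 ^ i * C (2 ^ h : ℤ) ^ (d - 1 - i) with hp
  have hp' : p * (X 0 - C (2 ^ h : ℤ)) = X 0 ^ d - C a := by
    rw [hp, geom_sum₂_mul, ← C_pow, ha, ← pow_mul, Nat.mul_comm h d]
  have hq' : q * (X 1 - C a) = X 1 ^ d - C (2 ^ (d ^ 2 * h) : ℤ) := by
    rw [hq, geom_sum₂_mul, ← C_pow, ha, ← pow_mul]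
    congr 2
    ring
  have hqdeg : q.totalDegree = d - 1 := by
    apply le_antisymm
    · rw [hq]
      apply (totalDegree_finset_sum _ _).trans
      apply Finset.sup_le
      intro i hi
      calc (X 1 ^ i * C a ^ (d - 1 - i) : MvPolynomial (Fin 2) ℤ).totalDegree
          ≤ (X 1 ^ i : MvPolynomial (Fin 2) ℤ).totalDegree +
            (C a ^ (d - 1 - i) : MvPolynomial (Fin 2) ℤ).totalDegree := totalDegree_mul _ _
        _ ≤ i + 0 := by
            gcongr
            · exact (totalDegree_X_pow _ _).le
            · rw [← C_pow]; exact (totalDegree_C _).le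
        _ ≤ d - 1 := by have := mem_range.mp hi; omega
    · have hcoeff : coeff (Finsupp.single 1 (d - 1)) q ≠ 0 := by
        rw [hq, coeff_sum]
        rw [Finset.sum_eq_single (d - 1)]
        · simp [← C_pow, coeff_C_mul, mul_comm, coeff_X_pow]
        · intro i hi hne
          rw [← C_pow, mul_comm, coeff_C_mul, coeff_X_pow]
          rw [if_neg, mul_zero]
          intro hc
          first
          | exact hne (Finsupp.single_injective 1 hc)
          | exact hne (Finsupp.single_injective 1 hc).symm
        · intro hmem
          exact absurd (mem_range.mpr (by omega)) hmem
      have hle := le_totalDegree (mem_support_iff.mpr hcoeff)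
      rwa [Finsupp.sum_single_index rfl] at hle
  refine ⟨-(q * p), -q, ?_, ?_, ?_⟩
  · linear_combination q * hp' + hq'
  · rw [totalDegree_neg]
    apply (totalDegree_mul _ _).trans
    have hpdeg : p.totalDegree ≤ d - 1 := by
      rw [hp]
      apply (totalDegree_finset_sum _ _).trans
      apply Finset.sup_le
      intro i hi
      calc (X 0 ^ i * C (2^h : ℤ) ^ (d - 1 - i) : MvPolynomial (Fin 2) ℤ).totalDegree
          ≤ (X 0 ^ i : MvPolynomial (Fin 2) ℤ).totalDegree +
            (C (2^h : ℤ) ^ (d - 1 - i) : MvPolynomial (Fin 2) ℤ).totalDegree := totalDegree_mul _ _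
        _ ≤ i + 0 := by
            gcongr
            · exact (totalDegree_X_pow _ _).le
            · rw [← C_pow]; exact (totalDegree_C _).le
        _ ≤ d - 1 := by have := mem_range.mp hi; omega
    omega
  · rw [totalDegree_neg]; exact hqdeg
end

section
/- If q in Z[y1, y2] is nonzero and divisible by y2 - (y1 + 2^h)^{d^n}, then deg_{y1}(q) >= d^n and the maximum absolute value of a coefficient of q is at least 2^{d^n * h}. -/
open MvPolynomial

private lemma tcoeff_X_add_C {R : Type*} [CommRing R] [Nontrivial R] {c : R} (hc : c ≠ 0) :
    (Polynomial.X + Polynomial.C c).trailingCoeff = c := by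
  have h0 : (Polynomial.X + Polynomial.C c).coeff 0 = c := by simp
  have hnt : (Polynomial.X + Polynomial.C c).natTrailingDegree = 0 := by
    rw [Polynomial.natTrailingDegree_eq_zero]
    right; rw [h0]; exact hc
  rw [Polynomial.trailingCoeff, hnt, h0]

private lemma tcoeff_pow {R : Type*} [CommRing R] [IsDomain R] (p : Polynomial R) (k : ℕ) :
    (p ^ k).trailingCoeff = p.trailingCoeff ^ k := by
  induction k with
  | zero => simp [Polynomial.trailingCoeff]
  | succ k ih => rw [pow_succ, pow_succ, Polynomial.trailingCoeff_mul, ih]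

/-- If 0 ≠ q ∈ ℤ[y₁,y₂] is divisible by y₂ - (y₁ + 2ʰ)^{dⁿ}, then
deg_{y₁}(q) ≥ dⁿ and some coefficient c of q satisfies |c| ≥ 2^{dⁿ·h}. -/
theorem stmt16 (d h n : ℕ) (hd : 1 ≤ d) (hh : 1 ≤ h) (hn : 1 ≤ n)
    (q : MvPolynomial (Fin 2) ℤ) (hq : q ≠ 0)
    (hdvd : (X 1 - (X 0 + C (2 ^ h)) ^ d ^ n : MvPolynomial (Fin 2) ℤ) ∣ q) :
    d ^ n ≤ q.degreeOf 0 ∧ ∃ m : Fin 2 →₀ ℕ, (2 : ℤ) ^ (d ^ n * h) ≤ |q.coeff m| := by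
  classical
  set M := d ^ n with hM
  obtain ⟨r, hr⟩ := hdvd
  have hrne : r ≠ 0 := by rintro rfl; simp [hr] at hq
  -- swap variables
  set σ : Equiv.Perm (Fin 2) := Equiv.swap 0 1 with hσ
  set q' : MvPolynomial (Fin 2) ℤ := rename σ q with hq'
  have hq'ne : q' ≠ 0 := by
    intro hc
    exact hq (rename_injective (R := ℤ) σ σ.injective (by rw [map_zero]; exact hc))
  have hswap0 : σ (0 : Fin 2) = 1 := by simp [hσ]
  have hswap1 : σ (1 : Fin 2) = 0 := by simp [hσ]
  have hq'eq : q' = (X 0 - (X 1 + C (2 ^ h)) ^ M) * rename σ r := by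
    rw [hq', hr, map_mul, map_sub, map_pow, map_add, rename_X, rename_X, rename_C,
      hswap0, hswap1]
  -- pass to Polynomial (MvPolynomial (Fin 1) ℤ)
  set A := finSuccEquiv ℤ 1 q' with hA
  set P₁ : MvPolynomial (Fin 1) ℤ := (X 0 + C (2 ^ h)) ^ M with hP₁
  have h2hne : ((2 : ℤ) ^ h) ≠ 0 := pow_ne_zero h two_ne_zero
  have hP₁ne : P₁ ≠ 0 := by
    apply pow_ne_zero
    intro hc
    have h1 : constantCoeff ((X 0 + C ((2 : ℤ) ^ h)) : MvPolynomial (Fin 1) ℤ) = 0 := by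
      rw [hc]; simp
    rw [map_add, constantCoeff_X, constantCoeff_C, zero_add] at h1
    exact h2hne h1
  have hX1 : (finSuccEquiv ℤ 1) (X 1 : MvPolynomial (Fin 2) ℤ) = Polynomial.C (X 0) := by
    have : (X 1 : MvPolynomial (Fin 2) ℤ) = X (Fin.succ 0) := rfl
    rw [this, finSuccEquiv_X_succ]
  have hCfse : ∀ (k : ℕ) (a : ℤ), finSuccEquiv ℤ k (C a) = Polynomial.C (C a) := by
    intro k a; simp [finSuccEquiv_apply]
  have hAeq : A = (Polynomial.X - Polynomial.C P₁) * finSuccEquiv ℤ 1 (rename σ r) := by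
    rw [hA, hq'eq, map_mul, map_sub, map_pow, map_add, finSuccEquiv_X_zero, hX1,
      hCfse, hP₁, ← Polynomial.C_add, ← Polynomial.C_pow]
  have hRne : finSuccEquiv ℤ 1 (rename σ r) ≠ 0 := by
    intro hc
    apply hrne
    apply rename_injective (R := ℤ) σ σ.injective
    rw [map_zero]
    exact (map_eq_zero_iff _ (finSuccEquiv ℤ 1).injective).mp hc
  have hAne : A ≠ 0 := by
    intro hc
    exact hq'ne ((map_eq_zero_iff _ (finSuccEquiv ℤ 1).injective).mp hc)
  -- the trailing coefficient g of A
  set g : MvPolynomial (Fin 1) ℤ := A.trailingCoeff with hg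
  have htc_fac : (Polynomial.X - Polynomial.C P₁ :
      Polynomial (MvPolynomial (Fin 1) ℤ)).trailingCoeff = -P₁ := by
    have hx : (Polynomial.X - Polynomial.C P₁ : Polynomial (MvPolynomial (Fin 1) ℤ)) =
        Polynomial.X + Polynomial.C (-P₁) := by rw [map_neg]; ring
    rw [hx, tcoeff_X_add_C (neg_ne_zero.mpr hP₁ne)]
  have hgeq : g = -P₁ * (finSuccEquiv ℤ 1 (rename σ r)).trailingCoeff := by
    rw [hg, hAeq, Polynomial.trailingCoeff_mul, htc_fac]
  have hgne : g ≠ 0 := fun hc => hAne (Polynomial.trailingCoeff_eq_zero.mp hc)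
  have htRne : (finSuccEquiv ℤ 1 (rename σ r)).trailingCoeff ≠ 0 :=
    fun hc => hRne (Polynomial.trailingCoeff_eq_zero.mp hc)
  -- pass to Polynomial (MvPolynomial (Fin 0) ℤ)
  set B := finSuccEquiv ℤ 0 g with hB
  set S := finSuccEquiv ℤ 0 (-(finSuccEquiv ℤ 1 (rename σ r)).trailingCoeff) with hS
  have hSne : S ≠ 0 := by
    intro hc
    apply htRne
    have := (map_eq_zero_iff _ (finSuccEquiv ℤ 0).injective).mp hc
    simpa using this
  have hBeq : B = (Polynomial.X + Polynomial.C (C (2 ^ h))) ^ M * S := by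
    have hgeq' : g = P₁ * -(finSuccEquiv ℤ 1 (rename σ r)).trailingCoeff := by
      rw [hgeq]; ring
    rw [hB, hgeq', map_mul, hP₁, map_pow, map_add, finSuccEquiv_X_zero, hCfse, hS]
  have hBne : B ≠ 0 := by
    intro hc
    exact hgne ((map_eq_zero_iff _ (finSuccEquiv ℤ 0).injective).mp hc)
  have hCCne : (C ((2 : ℤ) ^ h) : MvPolynomial (Fin 0) ℤ) ≠ 0 := by
    intro hc
    apply h2hne
    have hc' : (C ((2 : ℤ) ^ h) : MvPolynomial (Fin 0) ℤ) = C 0 := by rw [hc, map_zero]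
    exact C_injective _ _ hc'
  constructor
  · -- degree claim
    have h1 : degreeOf 0 q = degreeOf 1 q' := by
      rw [hq', ← hswap0, degreeOf_rename_of_injective σ.injective]
    have h2 : degreeOf (0 : Fin 1) g ≤ degreeOf 1 q' := by
      have := degreeOf_coeff_finSuccEquiv q' (0 : Fin 1) A.natTrailingDegree
      have hsucc : Fin.succ (0 : Fin 1) = (1 : Fin 2) := rfl
      rw [hsucc] at this
      exact this
    have h3 : B.natDegree = degreeOf (0 : Fin 1) g := natDegree_finSuccEquiv g
    have h4 : M ≤ B.natDegree := by
      rw [hBeq, Polynomial.natDegree_mul (pow_ne_zero _ (Polynomial.X_add_C_ne_zero _)) hSne,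
        Polynomial.natDegree_pow, Polynomial.natDegree_X_add_C]
      simp
    rw [h1]
    omega
  · -- coefficient claim
    set t0 := B.natTrailingDegree with ht0
    set k0 := A.natTrailingDegree with hk0
    set m' : Fin 2 →₀ ℕ := Finsupp.cons k0 (Finsupp.cons t0 (0 : Fin 0 →₀ ℕ)) with hm'
    refine ⟨Finsupp.mapDomain σ m', ?_⟩
    have hcomp : (⇑σ ∘ ⇑σ) = id := by ext x; simp [hσ]
    have hmm : Finsupp.mapDomain ⇑σ (Finsupp.mapDomain ⇑σ m') = m' := by
      rw [← Finsupp.mapDomain_comp, hcomp, Finsupp.mapDomain_id]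
    have hcoeq : q.coeff (Finsupp.mapDomain σ m') = q'.coeff m' := by
      have := coeff_rename_mapDomain (⇑σ) σ.injective q (Finsupp.mapDomain ⇑σ m')
      rw [hmm] at this
      rw [hq']
      exact this.symm
    -- q'.coeff m' = coeff of cons t0 0 in g
    have hstep1 : q'.coeff m' = coeff (Finsupp.cons t0 (0 : Fin 0 →₀ ℕ)) g := by
      have := finSuccEquiv_coeff_coeff (Finsupp.cons t0 (0 : Fin 0 →₀ ℕ)) q' k0
      rw [hm']
      rw [← this]
      rfl
    -- coeff of cons t0 0 in g = constant coeff of B.trailingCoeff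
    have hstep2 : coeff (Finsupp.cons t0 (0 : Fin 0 →₀ ℕ)) g =
        coeff (0 : Fin 0 →₀ ℕ) B.trailingCoeff := by
      have := finSuccEquiv_coeff_coeff (0 : Fin 0 →₀ ℕ) g t0
      exact this.symm
    -- compute B.trailingCoeff
    have htcB : B.trailingCoeff = C ((2 : ℤ) ^ (h * M)) * S.trailingCoeff := by
      rw [hBeq, Polynomial.trailingCoeff_mul, tcoeff_pow,
        tcoeff_X_add_C hCCne, ← C_pow, ← pow_mul]
    have hStc : S.trailingCoeff ≠ 0 :=
      fun hc => hSne (Polynomial.trailingCoeff_eq_zero.mp hc)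
    have hz : coeff (0 : Fin 0 →₀ ℕ) S.trailingCoeff ≠ 0 := by
      intro hc
      apply hStc
      apply MvPolynomial.ext
      intro m
      rw [Subsingleton.elim m (0 : Fin 0 →₀ ℕ), hc, coeff_zero]
    have hval : coeff (0 : Fin 0 →₀ ℕ) B.trailingCoeff =
        2 ^ (h * M) * coeff (0 : Fin 0 →₀ ℕ) S.trailingCoeff := by
      rw [htcB, coeff_C_mul]
    rw [hcoeq, hstep1, hstep2, hval, abs_mul]
    have h2 : |(2 : ℤ) ^ (h * M)| = 2 ^ (h * M) := abs_of_nonneg (by positivity)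
    rw [h2, mul_comm M h]
    have : (1 : ℤ) ≤ |coeff (0 : Fin 0 →₀ ℕ) S.trailingCoeff| := by
      have := abs_pos.mpr hz
      omega
    nlinarith [pow_pos (show (0:ℤ) < 2 by norm_num) (h * M)]
end
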